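/- arXiv:2506.10455 — 2 statements merged into one kernel-verified Lean document; each statement's English description precedes it below -/
import Mathlib

section
/- Let X be a compactum (a compact perfect metric space with more than one point), let n ≥ 2 be an integer, and let f : X → X be a continuous map. Then the following statements are equivalent: (1) f is weakly mixing; (2) F_n(f) is weakly mixing; (3) SF_n(f) is weakly mixing; (4) F_n(f) is totally transitive; (5) SF_n(f) is totally transitive; (6) F_n(f) is transitive; (7) SF_n(f) is transitive. -/
open Metric Set TopologicalSpace

variable (X : Type*) [MetricSpace X] (n : ℕ)

/-- The `n`-fold symmetric product `F_n(X)`: nonempty subsets of `X` with at most `n`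
points, as a subspace of the nonempty compact subsets of `X` with the Hausdorff metric. -/
abbrev Fn := {A : NonemptyCompacts X // (A : Set X).Finite ∧ (A : Set X).ncard ≤ n}

/-- The induced map `F_n(f)` on the `n`-fold symmetric product, `A ↦ f(A)`. -/
noncomputable def FnMap (f : X → X) : Fn X n → Fn X n := fun A =>
  ⟨⟨⟨f '' (A.1 : Set X), (A.2.1.image f).isCompact⟩, A.1.nonempty.image f⟩,
    A.2.1.image f, le_trans (Set.ncard_image_le A.2.1) A.2.2⟩

/-- `F_1(X) ⊆ F_n(X)`: the set of singletons. -/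
def F1 : Set (Fn X n) := {A | ∃ x : X, (A.1 : Set X) = {x}}

/-- The setoid collapsing `F_1(X)` to a point. -/
def SFnSetoid : Setoid (Fn X n) where
  r A B := A = B ∨ (A ∈ F1 X n ∧ B ∈ F1 X n)
  iseqv := by
    refine ⟨fun _ => Or.inl rfl, fun h => h.imp Eq.symm And.symm, fun h₁ h₂ => ?_⟩
    rcases h₁ with rfl | h₁
    · exact h₂
    · rcases h₂ with rfl | h₂
      · exact Or.inr h₁
      · exact Or.inr ⟨h₁.1, h₂.2⟩

/-- The `n`-fold symmetric product suspension `SF_n(X) = F_n(X)/F_1(X)`,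
with the quotient topology. -/
abbrev SFn := Quotient (SFnSetoid X n)

/-- The quotient map `q : F_n(X) → SF_n(X)`. -/
def SFnQ : Fn X n → SFn X n := Quotient.mk (SFnSetoid X n)

/-- The induced map `SF_n(f)` on the suspension, with `SF_n(f) ∘ q = q ∘ F_n(f)`. -/
noncomputable def SFnMap (f : X → X) : SFn X n → SFn X n :=
  Quotient.lift (fun A => SFnQ X n (FnMap X n f A))
    (fun A B h => Quotient.sound (by
      rcases h with rfl | ⟨⟨x, hx⟩, ⟨y, hy⟩⟩
      · exact Or.inl rfl
      · exact Or.inr ⟨⟨f x, by simp [FnMap, hx]⟩, ⟨f y, by simp [FnMap, hy]⟩⟩))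

/-- The metric `ρ` on `SF_n(X)`:
`ρ(χ₁,χ₂) = H(F_1(X) ∪ q⁻¹(χ₁), F_1(X) ∪ q⁻¹(χ₂))` where `H` is the Hausdorff
distance between subsets of `F_n(X)`. -/
noncomputable def SFnDist : SFn X n → SFn X n → ℝ := fun a b =>
  Metric.hausdorffDist (F1 X n ∪ SFnQ X n ⁻¹' {a}) (F1 X n ∪ SFnQ X n ⁻¹' {b})

/-- `g` is (topologically) transitive. -/
def TransitiveMap {Z : Type*} [TopologicalSpace Z] (g : Z → Z) : Prop :=
  ∀ U V : Set Z, IsOpen U → IsOpen V → U.Nonempty → V.Nonempty →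
    ∃ k : ℕ, 0 < k ∧ (g^[k] '' U ∩ V).Nonempty

/-- `g` is totally transitive: `g^k` is transitive for every `k ≥ 1`. -/
def TotallyTransitive {Z : Type*} [TopologicalSpace Z] (g : Z → Z) : Prop :=
  ∀ k : ℕ, 0 < k → TransitiveMap (g^[k])

/-- `g` is weakly mixing. -/
def WeaklyMixing {Z : Type*} [TopologicalSpace Z] (g : Z → Z) : Prop :=
  ∀ U₁ U₂ V₁ V₂ : Set Z, IsOpen U₁ → IsOpen U₂ → IsOpen V₁ → IsOpen V₂ →
    U₁.Nonempty → U₂.Nonempty → V₁.Nonempty → V₂.Nonempty →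
    ∃ k : ℕ, 0 < k ∧ (g^[k] '' U₁ ∩ V₁).Nonempty ∧ (g^[k] '' U₂ ∩ V₂).Nonempty

/-!
`F_n(X)` is a factor of the product system `(X^n, f × ⋯ × f)` via `x ↦ range x`, and `SF_n(X)`
is a factor of `F_n(X)`. Weak mixing passes to finite products (by Furstenberg's intersection
lemma any finitely many pairs of open sets have a common hitting time), and weak mixing, total
transitivity and transitivity all pass to factors; weak mixing implies total transitivity since
the hitting times of a weakly mixing map contain arbitrarily long intervals.

Conversely, apply transitivity of `F_n(f)` or `SF_n(f)` to the open set of subsets of `U` meeting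
two disjoint open subsets of `U`, and to the open set of subsets meeting disjoint open subsets of
`V₁` and of `V₂`. This gives one time `k` at which `f^k(U)` meets both `V₁` and `V₂`, which forces
weak mixing. Perfectness provides the disjoint open subsets, so that neither open set contains a
singleton and both survive the collapse of `F_1(X)` in `SF_n(X)`.
-/

section HittingTimes

variable {Z W ι : Type*} {g : Z → Z} {U V : Set Z} {k : ℕ}

def hittingTimes (g : Z → Z) (U V : Set Z) : Set ℕ := {k | (g^[k] '' U ∩ V).Nonempty}

theorem mem_hittingTimes_iff : k ∈ hittingTimes g U V ↔ (U ∩ g^[k] ⁻¹' V).Nonempty :=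
  Set.image_inter_nonempty_iff

theorem hittingTimes_mono {U' V' : Set Z} (hU : U ⊆ U') (hV : V ⊆ V') :
    hittingTimes g U V ⊆ hittingTimes g U' V' :=
  fun _ hk => hk.mono (inter_subset_inter (image_mono hU) hV)

theorem mem_hittingTimes_preimage_iterate {i : ℕ} :
    k ∈ hittingTimes g U (g^[i] ⁻¹' V) ↔ i + k ∈ hittingTimes g U V := by
  simp only [mem_hittingTimes_iff, ← preimage_comp, ← Function.iterate_add]

theorem Function.Semiconj.hittingTimes_preimage_subset {π : Z → W} {h : W → W}
    (hπ : Function.Semiconj π g h) (U V : Set W) :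
    hittingTimes g (π ⁻¹' U) (π ⁻¹' V) ⊆ hittingTimes h U V := by
  intro k hk
  obtain ⟨z, hzU, hzV⟩ := mem_hittingTimes_iff.1 hk
  exact mem_hittingTimes_iff.2 ⟨π z, hzU, by simpa only [mem_preimage, ← hπ.iterate_right k z]⟩

theorem Function.Semiconj.hittingTimes_image_subset {π : Z → W} {h : W → W}
    (hπ : Function.Semiconj π g h) (U : Set Z) (V : Set W) :
    hittingTimes h (π '' U) V ⊆ hittingTimes g U (π ⁻¹' V) := by
  intro k hk
  obtain ⟨_, ⟨z, hzU, rfl⟩, hzV⟩ := mem_hittingTimes_iff.1 hk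
  exact mem_hittingTimes_iff.2 ⟨z, hzU, by simpa only [mem_preimage, hπ.iterate_right k z]⟩

theorem iInter_hittingTimes_subset_hittingTimes_pi (u v : ι → Set Z) :
    ⋂ i, hittingTimes g (u i) (v i) ⊆
      hittingTimes (fun x : ι → Z => g ∘ x) (univ.pi u) (univ.pi v) := by
  intro k hk
  choose y hyu hyv using fun i => mem_hittingTimes_iff.1 (mem_iInter.1 hk i)
  have hcoord : ∀ i, ((fun x : ι → Z => g ∘ x)^[k] y) i = g^[k] (y i) := fun i =>
    (Function.Semiconj.iterate_right (f := fun x : ι → Z => x i) (fun _ => rfl) k y)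
  exact mem_hittingTimes_iff.2 ⟨y, fun i _ => hyu i, fun i _ => (hcoord i).symm ▸ hyv i⟩

end HittingTimes

section Dynamics

variable {Z : Type*} [TopologicalSpace Z] {g : Z → Z} {U V : Set Z}

theorem WeaklyMixing.transitiveMap (hwm : WeaklyMixing g) : TransitiveMap g :=
  fun U V hU hV hU₀ hV₀ =>
    (hwm U U V V hU hU hV hV hU₀ hU₀ hV₀ hV₀).imp fun _ hk => ⟨hk.1, hk.2.1⟩

theorem TotallyTransitive.transitiveMap (htt : TotallyTransitive g) : TransitiveMap g := by
  simpa using htt 1 one_pos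

theorem TransitiveMap.preimage_iterate_nonempty (htr : TransitiveMap g) (hg : Continuous g)
    (hV : IsOpen V) (hV₀ : V.Nonempty) (i : ℕ) : (g^[i] ⁻¹' V).Nonempty := by
  induction i with
  | zero => exact hV₀
  | succ i ih =>
    obtain ⟨k, hk, hkV⟩ := htr _ _ (hV.preimage (hg.iterate i)) (hV.preimage (hg.iterate i)) ih ih
    obtain ⟨w, -, hw⟩ := mem_hittingTimes_iff.1 hkV
    refine ⟨g^[k - 1] w, ?_⟩
    rwa [mem_preimage, ← Function.iterate_add_apply, show i + 1 + (k - 1) = i + k by omega,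
      Function.iterate_add_apply]

/-- Furstenberg's intersection lemma. -/
theorem WeaklyMixing.exists_hittingTimes_subset_inter (hwm : WeaklyMixing g) (hg : Continuous g)
    {U₁ V₁ U₂ V₂ : Set Z} (hU₁ : IsOpen U₁) (hV₁ : IsOpen V₁) (hU₂ : IsOpen U₂) (hV₂ : IsOpen V₂)
    (hU₁₀ : U₁.Nonempty) (hV₁₀ : V₁.Nonempty) (hU₂₀ : U₂.Nonempty) (hV₂₀ : V₂.Nonempty) :
    ∃ E F, IsOpen E ∧ IsOpen F ∧ E.Nonempty ∧ F.Nonempty ∧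
      hittingTimes g E F ⊆ hittingTimes g U₁ V₁ ∩ hittingTimes g U₂ V₂ := by
  obtain ⟨m, -, hm₁, hm₂⟩ := hwm U₁ V₁ U₂ V₂ hU₁ hV₁ hU₂ hV₂ hU₁₀ hV₁₀ hU₂₀ hV₂₀
  refine ⟨U₁ ∩ g^[m] ⁻¹' U₂, V₁ ∩ g^[m] ⁻¹' V₂, hU₁.inter (hU₂.preimage (hg.iterate m)),
    hV₁.inter (hV₂.preimage (hg.iterate m)), mem_hittingTimes_iff.1 hm₁,
    mem_hittingTimes_iff.1 hm₂, fun k hk => ⟨?_, ?_⟩⟩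
  · exact hittingTimes_mono inter_subset_left inter_subset_left hk
  · exact (Function.Commute.iterate_self g m).hittingTimes_preimage_subset _ _
      (hittingTimes_mono inter_subset_right inter_subset_right hk)

section Families

variable {ι : Type*} {U V : ι → Set Z}

theorem WeaklyMixing.exists_hittingTimes_subset_biInter (hwm : WeaklyMixing g)
    (hg : Continuous g) (hU : ∀ i, IsOpen (U i)) (hV : ∀ i, IsOpen (V i))
    (hU₀ : ∀ i, (U i).Nonempty) (hV₀ : ∀ i, (V i).Nonempty) {s : Finset ι} (hs : s.Nonempty) :
    ∃ E F, IsOpen E ∧ IsOpen F ∧ E.Nonempty ∧ F.Nonempty ∧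
      hittingTimes g E F ⊆ ⋂ i ∈ s, hittingTimes g (U i) (V i) := by
  induction hs using Finset.Nonempty.cons_induction with
  | singleton i => exact ⟨U i, V i, hU i, hV i, hU₀ i, hV₀ i, by simp⟩
  | cons i s _ _ ih =>
    obtain ⟨E, F, hE, hF, hE₀, hF₀, hEF⟩ := ih
    obtain ⟨E', F', hE', hF', hE'₀, hF'₀, hE'F'⟩ :=
      hwm.exists_hittingTimes_subset_inter hg (hU i) (hV i) hE hF (hU₀ i) (hV₀ i) hE₀ hF₀
    refine ⟨E', F', hE', hF', hE'₀, hF'₀, fun k hk => mem_iInter₂.2 fun j hj => ?_⟩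
    rcases Finset.mem_cons.1 hj with rfl | hj
    · exact (hE'F' hk).1
    · exact mem_iInter₂.1 (hEF (hE'F' hk).2) j hj

theorem WeaklyMixing.exists_pos_forall_mem_hittingTimes [Finite ι] (hwm : WeaklyMixing g)
    (hg : Continuous g) (hU : ∀ i, IsOpen (U i)) (hV : ∀ i, IsOpen (V i))
    (hU₀ : ∀ i, (U i).Nonempty) (hV₀ : ∀ i, (V i).Nonempty) :
    ∃ k, 0 < k ∧ ∀ i, k ∈ hittingTimes g (U i) (V i) := by
  cases isEmpty_or_nonempty ι
  · exact ⟨1, one_pos, isEmptyElim⟩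
  have := Fintype.ofFinite ι
  obtain ⟨E, F, hE, hF, hE₀, hF₀, hEF⟩ :=
    hwm.exists_hittingTimes_subset_biInter hg hU hV hU₀ hV₀ Finset.univ_nonempty
  obtain ⟨k, hk, hkEF⟩ := hwm.transitiveMap E F hE hF hE₀ hF₀
  exact ⟨k, hk, fun i => mem_iInter₂.1 (hEF hkEF) i (Finset.mem_univ i)⟩

end Families

theorem WeaklyMixing.totallyTransitive (hwm : WeaklyMixing g) (hg : Continuous g) :
    TotallyTransitive g := by
  intro m hm U V hU hV hU₀ hV₀
  obtain ⟨k, hk, hkV⟩ := hwm.exists_pos_forall_mem_hittingTimes (U := fun _ : Fin (m + 1) => U)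
    (V := fun i => g^[i] ⁻¹' V) hg (fun _ => hU) (fun i => hV.preimage (hg.iterate i))
    (fun _ => hU₀) (fun i => hwm.transitiveMap.preimage_iterate_nonempty hg hV hV₀ i)
  -- the window `[k, k + m]` of hitting times contains the multiple `m * (k / m + 1)` of `m`
  have hmul : m - k % m + k = m * (k / m + 1) := by
    have := Nat.div_add_mod k m
    have := Nat.mod_lt k hm
    rw [Nat.mul_add_one]
    omega
  have := mem_hittingTimes_preimage_iterate.1 (hkV ⟨m - k % m, by omega⟩)
  refine ⟨k / m + 1, Nat.succ_pos _, ?_⟩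
  rwa [← Function.iterate_mul, ← hmul]

theorem weaklyMixing_of_forall_hittingTimes_inter (hg : Continuous g)
    (h : ∀ U V₁ V₂ : Set Z, IsOpen U → IsOpen V₁ → IsOpen V₂ → U.Nonempty → V₁.Nonempty →
      V₂.Nonempty → ∃ k, 0 < k ∧ k ∈ hittingTimes g U V₁ ∩ hittingTimes g U V₂) :
    WeaklyMixing g := by
  intro U₁ U₂ V₁ V₂ hU₁ hU₂ hV₁ hV₂ hU₁₀ hU₂₀ hV₁₀ hV₂₀
  obtain ⟨a, -, haU₁, haV₁⟩ := h U₂ U₁ V₁ hU₂ hU₁ hV₁ hU₂₀ hU₁₀ hV₁₀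
  obtain ⟨k, hk, hkV₁, hkV₂⟩ := h (U₂ ∩ g^[a] ⁻¹' U₁) (g^[a] ⁻¹' V₁) V₂
    (hU₂.inter (hU₁.preimage (hg.iterate a))) (hV₁.preimage (hg.iterate a)) hV₂
    (mem_hittingTimes_iff.1 haU₁) ((mem_hittingTimes_iff.1 haV₁).mono inter_subset_right) hV₂₀
  exact ⟨k, hk, (Function.Commute.iterate_self g a).hittingTimes_preimage_subset _ _
    (hittingTimes_mono inter_subset_right subset_rfl hkV₁),
    hittingTimes_mono inter_subset_left subset_rfl hkV₂⟩

def TransitiveAwayFrom (g : Z → Z) (S : Set Z) : Prop :=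
  ∀ U V : Set Z, IsOpen U → IsOpen V → U.Nonempty → V.Nonempty → Disjoint U S → Disjoint V S →
    ∃ k, 0 < k ∧ k ∈ hittingTimes g U V

theorem TransitiveMap.transitiveAwayFrom (htr : TransitiveMap g) (S : Set Z) :
    TransitiveAwayFrom g S :=
  fun U V hU hV hU₀ hV₀ _ _ => htr U V hU hV hU₀ hV₀

end Dynamics

section Factor

variable {Z W : Type*} [TopologicalSpace Z] [TopologicalSpace W] {π : Z → W} {g : Z → Z}
  {h : W → W}

theorem TransitiveMap.of_semiconj (htr : TransitiveMap g) (hπ : Continuous π)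
    (hπs : Function.Surjective π) (hsemi : Function.Semiconj π g h) : TransitiveMap h :=
  fun U V hU hV hU₀ hV₀ =>
    (htr _ _ (hU.preimage hπ) (hV.preimage hπ) (hπs.nonempty_preimage.2 hU₀)
      (hπs.nonempty_preimage.2 hV₀)).imp fun _ hk =>
        ⟨hk.1, hsemi.hittingTimes_preimage_subset U V hk.2⟩

theorem WeaklyMixing.of_semiconj (hwm : WeaklyMixing g) (hπ : Continuous π)
    (hπs : Function.Surjective π) (hsemi : Function.Semiconj π g h) : WeaklyMixing h :=
  fun U₁ U₂ V₁ V₂ hU₁ hU₂ hV₁ hV₂ hU₁₀ hU₂₀ hV₁₀ hV₂₀ =>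
    (hwm _ _ _ _ (hU₁.preimage hπ) (hU₂.preimage hπ) (hV₁.preimage hπ) (hV₂.preimage hπ)
      (hπs.nonempty_preimage.2 hU₁₀) (hπs.nonempty_preimage.2 hU₂₀)
      (hπs.nonempty_preimage.2 hV₁₀) (hπs.nonempty_preimage.2 hV₂₀)).imp fun _ hk =>
        ⟨hk.1, hsemi.hittingTimes_preimage_subset U₁ V₁ hk.2.1,
          hsemi.hittingTimes_preimage_subset U₂ V₂ hk.2.2⟩

theorem TotallyTransitive.of_semiconj (htt : TotallyTransitive g) (hπ : Continuous π)
    (hπs : Function.Surjective π) (hsemi : Function.Semiconj π g h) : TotallyTransitive h :=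
  fun m hm => (htt m hm).of_semiconj hπ hπs (hsemi.iterate_right m)

end Factor

section Pi

variable {Z ι : Type*} [TopologicalSpace Z] {g : Z → Z}

theorem exists_pi_subset_of_isOpen [Finite ι] {U : Set (ι → Z)} (hU : IsOpen U)
    (hU₀ : U.Nonempty) :
    ∃ u : ι → Set Z, (∀ i, IsOpen (u i)) ∧ (∀ i, (u i).Nonempty) ∧ univ.pi u ⊆ U := by
  obtain ⟨x, hx⟩ := hU₀
  obtain ⟨u, hu, huU⟩ := isOpen_pi_iff'.1 hU x hx
  exact ⟨u, fun i => (hu i).1, fun i => ⟨x i, (hu i).2⟩, huU⟩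

theorem WeaklyMixing.pi [Finite ι] (hwm : WeaklyMixing g) (hg : Continuous g) :
    WeaklyMixing (fun x : ι → Z => g ∘ x) := by
  intro U₁ U₂ V₁ V₂ hU₁ hU₂ hV₁ hV₂ hU₁₀ hU₂₀ hV₁₀ hV₂₀
  obtain ⟨u₁, hu₁, hu₁₀, hu₁U⟩ := exists_pi_subset_of_isOpen hU₁ hU₁₀
  obtain ⟨u₂, hu₂, hu₂₀, hu₂U⟩ := exists_pi_subset_of_isOpen hU₂ hU₂₀
  obtain ⟨v₁, hv₁, hv₁₀, hv₁V⟩ := exists_pi_subset_of_isOpen hV₁ hV₁₀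
  obtain ⟨v₂, hv₂, hv₂₀, hv₂V⟩ := exists_pi_subset_of_isOpen hV₂ hV₂₀
  obtain ⟨k, hk, hkuv⟩ := hwm.exists_pos_forall_mem_hittingTimes (U := Sum.elim u₁ u₂)
    (V := Sum.elim v₁ v₂) hg (Sum.forall.2 ⟨hu₁, hu₂⟩) (Sum.forall.2 ⟨hv₁, hv₂⟩)
    (Sum.forall.2 ⟨hu₁₀, hu₂₀⟩) (Sum.forall.2 ⟨hv₁₀, hv₂₀⟩)
  exact ⟨k, hk,
    hittingTimes_mono hu₁U hv₁V (iInter_hittingTimes_subset_hittingTimes_pi u₁ v₁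
      (mem_iInter.2 fun i => hkuv (.inl i))),
    hittingTimes_mono hu₂U hv₂V (iInter_hittingTimes_subset_hittingTimes_pi u₂ v₂
      (mem_iInter.2 fun i => hkuv (.inr i)))⟩

end Pi

theorem exists_disjoint_open_subsets {X : Type*} [TopologicalSpace X] [T2Space X]
    [PerfectSpace X] {V₁ V₂ : Set X} (hV₁ : IsOpen V₁) (hV₂ : IsOpen V₂) (hV₁₀ : V₁.Nonempty)
    (hV₂₀ : V₂.Nonempty) :
    ∃ W₁ W₂ : Set X, IsOpen W₁ ∧ IsOpen W₂ ∧ W₁.Nonempty ∧ W₂.Nonempty ∧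
      W₁ ⊆ V₁ ∧ W₂ ⊆ V₂ ∧ Disjoint W₁ W₂ := by
  obtain ⟨a, ha⟩ := hV₁₀
  obtain ⟨b, hb, hba⟩ : ∃ b ∈ V₂, b ≠ a := by
    obtain ⟨v, hv⟩ := hV₂₀
    by_cases hva : v = a
    · subst hva
      obtain ⟨b, hb, hbv⟩ :=
        Filter.nonempty_of_mem (inter_mem_nhdsWithin {v}ᶜ (hV₂.mem_nhds hv))
      exact ⟨b, hbv, hb⟩
    · exact ⟨v, hv, hva⟩
  obtain ⟨s, t, hs, ht, has, hbt, hst⟩ := t2_separation hba.symm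
  exact ⟨V₁ ∩ s, V₂ ∩ t, hV₁.inter hs, hV₂.inter ht, ⟨a, ha, has⟩, ⟨b, hb, hbt⟩,
    inter_subset_left, inter_subset_left, hst.mono inter_subset_right inter_subset_right⟩

section SymmetricProduct

variable {X : Type*} [MetricSpace X] {n : ℕ}

namespace Fn

theorem ext {A B : Fn X n} (h : (A.1 : Set X) = B.1) : A = B :=
  Subtype.ext (NonemptyCompacts.ext h)

section OfFun

variable [NeZero n]

def ofFun (x : Fin n → X) : Fn X n :=
  ⟨⟨⟨range x, (finite_range x).isCompact⟩, range_nonempty x⟩, finite_range x, by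
    calc (range x).ncard = (x '' univ).ncard := by rw [image_univ]
      _ ≤ (univ : Set (Fin n)).ncard := ncard_image_le
      _ = n := by simp⟩

@[simp]
theorem coe_ofFun (x : Fin n → X) : ((ofFun x).1 : Set X) = range x := rfl

theorem ofFun_surjective : Function.Surjective (ofFun : (Fin n → X) → Fn X n) := by
  intro A
  have := A.2.1.fintype
  have : Nonempty (A.1 : Set X) := A.1.nonempty.to_subtype
  obtain ⟨e⟩ : Nonempty ((A.1 : Set X) ↪ Fin n) := Function.Embedding.nonempty_of_card_le <| by
    rw [Fintype.card_fin, ← Nat.card_eq_fintype_card, Nat.card_coe_set_eq]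
    exact A.2.2
  refine ⟨(↑) ∘ Function.invFun e, ext ?_⟩
  rw [coe_ofFun, range_comp, (Function.invFun_surjective e.injective).range_eq, image_univ,
    Subtype.range_coe]

theorem lipschitzWith_ofFun : LipschitzWith 1 (ofFun : (Fin n → X) → Fn X n) :=
  LipschitzWith.mk_one fun x y => hausdorffDist_le_of_mem_dist dist_nonneg
    (fun _ ⟨i, hi⟩ => ⟨y i, mem_range_self i, hi ▸ dist_le_pi_dist x y i⟩)
    (fun _ ⟨i, hi⟩ => ⟨x i, mem_range_self i, hi ▸ dist_comm (x i) (y i) ▸ dist_le_pi_dist x y i⟩)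

theorem semiconj_ofFun (f : X → X) :
    Function.Semiconj ofFun (fun x : Fin n → X => f ∘ x) (FnMap X n f) :=
  fun x => ext (range_comp f x)

end OfFun

theorem isOpen_setOf_subset {U : Set X} (hU : IsOpen U) :
    IsOpen {A : Fn X n | (A.1 : Set X) ⊆ U} :=
  (NonemptyCompacts.isOpen_subsets_of_isOpen hU).preimage continuous_subtype_val

theorem isOpen_setOf_inter_nonempty {V : Set X} (hV : IsOpen V) :
    IsOpen {A : Fn X n | ((A.1 : Set X) ∩ V).Nonempty} :=
  (NonemptyCompacts.isOpen_inter_nonempty_of_isOpen hV).preimage continuous_subtype_val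

def pair (hn : 2 ≤ n) (x y : X) : Fn X n :=
  ⟨⟨⟨{x, y}, (toFinite _).isCompact⟩, insert_nonempty x {y}⟩, toFinite ({x, y} : Set X),
    (ncard_insert_le x {y}).trans (by rwa [ncard_singleton])⟩

@[simp]
theorem coe_pair (hn : 2 ≤ n) (x y : X) : ((pair hn x y).1 : Set X) = {x, y} := rfl

def meetsBoth (S T : Set X) : Set (Fn X n) :=
  {A | ((A.1 : Set X) ∩ S).Nonempty ∧ ((A.1 : Set X) ∩ T).Nonempty}

theorem isOpen_meetsBoth {S T : Set X} (hS : IsOpen S) (hT : IsOpen T) :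
    IsOpen (meetsBoth (n := n) S T) :=
  (isOpen_setOf_inter_nonempty hS).inter (isOpen_setOf_inter_nonempty hT)

theorem pair_mem_meetsBoth (hn : 2 ≤ n) {S T : Set X} {x y : X} (hx : x ∈ S) (hy : y ∈ T) :
    pair hn x y ∈ meetsBoth S T :=
  ⟨⟨x, by simp, hx⟩, ⟨y, by simp, hy⟩⟩

theorem disjoint_meetsBoth_F1 {S T : Set X} (hST : Disjoint S T) :
    Disjoint (meetsBoth (n := n) S T) (F1 X n) := by
  rw [Set.disjoint_left]
  rintro A ⟨⟨s, hsA, hsS⟩, ⟨t, htA, htT⟩⟩ ⟨x, hx⟩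
  rw [hx, mem_singleton_iff] at hsA htA
  exact Set.disjoint_left.1 hST hsS (hsA.trans htA.symm ▸ htT)

theorem hittingTimes_FnMap_subset (f : X → X) (U V : Set X) :
    hittingTimes (FnMap X n f) {A | (A.1 : Set X) ⊆ U} {A | ((A.1 : Set X) ∩ V).Nonempty} ⊆
      hittingTimes f U V := by
  rintro k ⟨_, ⟨A, hAU, rfl⟩, hAV⟩
  have hcoe : (((FnMap X n f)^[k] A).1 : Set X) = f^[k] '' A.1 :=
    (Function.Semiconj.iterate_right (f := fun A : Fn X n => (A.1 : Set X))
      (fun _ => rfl) k A).trans (congrFun Set.image_iterate_eq _).symm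
  rw [mem_ofPred_eq, hcoe] at hAV
  exact hAV.mono (inter_subset_inter_left _ (image_mono hAU))

end Fn

theorem weaklyMixing_of_transitiveAwayFrom [PerfectSpace X] (hn : 2 ≤ n) {f : X → X}
    (hf : Continuous f) (htr : TransitiveAwayFrom (FnMap X n f) (F1 X n)) : WeaklyMixing f := by
  refine weaklyMixing_of_forall_hittingTimes_inter hf fun U V₁ V₂ hU hV₁ hV₂ hU₀ hV₁₀ hV₂₀ => ?_
  obtain ⟨W₁, W₂, hW₁, hW₂, ⟨w₁, hw₁⟩, ⟨w₂, hw₂⟩, hW₁U, hW₂U, hW⟩ :=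
    exists_disjoint_open_subsets hU hU hU₀ hU₀
  obtain ⟨V₁', V₂', hV₁', hV₂', ⟨v₁, hv₁⟩, ⟨v₂, hv₂⟩, hV₁'V₁, hV₂'V₂, hV'⟩ :=
    exists_disjoint_open_subsets hV₁ hV₂ hV₁₀ hV₂₀
  obtain ⟨k, hk, hk'⟩ := htr ({A | (A.1 : Set X) ⊆ U} ∩ Fn.meetsBoth W₁ W₂) (Fn.meetsBoth V₁' V₂')
    ((Fn.isOpen_setOf_subset hU).inter (Fn.isOpen_meetsBoth hW₁ hW₂))
    (Fn.isOpen_meetsBoth hV₁' hV₂')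
    ⟨Fn.pair hn w₁ w₂, by simp [insert_subset_iff, hW₁U hw₁, hW₂U hw₂],
      Fn.pair_mem_meetsBoth hn hw₁ hw₂⟩
    ⟨Fn.pair hn v₁ v₂, Fn.pair_mem_meetsBoth hn hv₁ hv₂⟩
    ((Fn.disjoint_meetsBoth_F1 hW).mono_left inter_subset_right) (Fn.disjoint_meetsBoth_F1 hV')
  exact ⟨k, hk,
    Fn.hittingTimes_FnMap_subset f U V₁ (hittingTimes_mono inter_subset_left
      (fun _ hA => hA.1.mono (inter_subset_inter_right _ hV₁'V₁)) hk'),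
    Fn.hittingTimes_FnMap_subset f U V₂ (hittingTimes_mono inter_subset_left
      (fun _ hA => hA.2.mono (inter_subset_inter_right _ hV₂'V₂)) hk')⟩

end SymmetricProduct

section Suspension

variable {X : Type*} [MetricSpace X] {n : ℕ}

theorem continuous_SFnQ : Continuous (SFnQ X n) := continuous_quot_mk

theorem SFnQ_surjective : Function.Surjective (SFnQ X n) := Quotient.mk_surjective

theorem semiconj_SFnQ (f : X → X) :
    Function.Semiconj (SFnQ X n) (FnMap X n f) (SFnMap X n f) :=
  fun _ => rfl

theorem SFnQ_preimage_image {𝒰 : Set (Fn X n)} (h : Disjoint 𝒰 (F1 X n)) :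
    SFnQ X n ⁻¹' (SFnQ X n '' 𝒰) = 𝒰 := by
  refine Subset.antisymm ?_ (subset_preimage_image _ _)
  rintro B ⟨A, hA, hAB⟩
  rcases Quotient.exact hAB with rfl | ⟨hA1, -⟩
  · exact hA
  · exact absurd hA1 (Set.disjoint_left.1 h hA)

theorem isOpen_SFnQ_image {𝒰 : Set (Fn X n)} (h𝒰 : IsOpen 𝒰) (h : Disjoint 𝒰 (F1 X n)) :
    IsOpen (SFnQ X n '' 𝒰) := by
  rw [← isQuotientMap_quotient_mk'.isOpen_preimage]
  exact (SFnQ_preimage_image h).symm ▸ h𝒰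

theorem transitiveAwayFrom_FnMap_of_transitiveMap_SFnMap {f : X → X}
    (htr : TransitiveMap (SFnMap X n f)) :
    TransitiveAwayFrom (FnMap X n f) (F1 X n) := by
  intro 𝒰 𝒱 h𝒰 h𝒱 h𝒰₀ h𝒱₀ h𝒰F h𝒱F
  obtain ⟨k, hk, hk𝒱⟩ := htr _ _ (isOpen_SFnQ_image h𝒰 h𝒰F) (isOpen_SFnQ_image h𝒱 h𝒱F)
    (h𝒰₀.image _) (h𝒱₀.image _)
  refine ⟨k, hk, ?_⟩
  simpa only [SFnQ_preimage_image h𝒱F] using (semiconj_SFnQ f).hittingTimes_image_subset 𝒰 _ hk𝒱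

end Suspension

theorem stmt9_general (X : Type*) [MetricSpace X]
    (hX : Perfect (Set.univ : Set X))
    (n : ℕ) (hn : 2 ≤ n) (f : X → X) (hf : Continuous f) :
    List.TFAE [WeaklyMixing f,
      WeaklyMixing (FnMap X n f),
      WeaklyMixing (SFnMap X n f),
      TotallyTransitive (FnMap X n f),
      TotallyTransitive (SFnMap X n f),
      TransitiveMap (FnMap X n f),
      TransitiveMap (SFnMap X n f)] := by
  have : PerfectSpace X := ⟨hX.2⟩
  have : NeZero n := ⟨by omega⟩
  have hf_pi : Continuous fun x : Fin n → X => f ∘ x :=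
    continuous_pi fun i => hf.comp (continuous_apply i)
  have hofFun := Fn.lipschitzWith_ofFun (X := X) (n := n) |>.continuous
  tfae_have 1 → 2 := fun h =>
    (h.pi hf).of_semiconj hofFun Fn.ofFun_surjective (Fn.semiconj_ofFun f)
  tfae_have 1 → 4 := fun h =>
    ((h.pi hf).totallyTransitive hf_pi).of_semiconj hofFun Fn.ofFun_surjective (Fn.semiconj_ofFun f)
  tfae_have 2 → 3 := fun h => h.of_semiconj continuous_SFnQ SFnQ_surjective (semiconj_SFnQ f)
  tfae_have 4 → 5 := fun h => h.of_semiconj continuous_SFnQ SFnQ_surjective (semiconj_SFnQ f)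
  tfae_have 3 → 7 := WeaklyMixing.transitiveMap
  tfae_have 4 → 6 := TotallyTransitive.transitiveMap
  tfae_have 5 → 7 := TotallyTransitive.transitiveMap
  tfae_have 6 → 1 := fun h => weaklyMixing_of_transitiveAwayFrom hn hf (h.transitiveAwayFrom _)
  tfae_have 7 → 1 := fun h =>
    weaklyMixing_of_transitiveAwayFrom hn hf (transitiveAwayFrom_FnMap_of_transitiveMap_SFnMap h)
  tfae_finish

theorem stmt9 (X : Type*) [MetricSpace X] [CompactSpace X] [Nontrivial X]
    (hX : Perfect (Set.univ : Set X))
    (n : ℕ) (hn : 2 ≤ n) (f : X → X) (hf : Continuous f) :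
    List.TFAE [WeaklyMixing f,
      WeaklyMixing (FnMap X n f),
      WeaklyMixing (SFnMap X n f),
      TotallyTransitive (FnMap X n f),
      TotallyTransitive (SFnMap X n f),
      TransitiveMap (FnMap X n f),
      TransitiveMap (SFnMap X n f)] :=
  stmt9_general X hX n hn f hf
end

section
/- Let X be a compactum (a compact perfect metric space with more than one point), let n ≥ 2 be an integer, let f : X → X be a continuous map, and let B ∈ F_n(X). Then B is a transitive point of F_n(f) if and only if q(B) is a transitive point of SF_n(f); moreover, if B is a transitive point of F_n(f), then every x ∈ B is a transitive point of f. -/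
open Metric Set TopologicalSpace

variable (X : Type*) [MetricSpace X] (n : ℕ)

/-- `z` is a transitive point of `g`: its forward orbit `{g^k(z) : k ∈ ℤ₊}` is dense. -/
def TransitivePt {Z : Type*} [TopologicalSpace Z] (g : Z → Z) (z : Z) : Prop :=
  Dense (Set.range fun k : ℕ => g^[k] z)

lemma fnEdist_ne_top (A B : NonemptyCompacts X) : EMetric.hausdorffEdist (A : Set X) (B : Set X) ≠ ⊤ :=
  Metric.hausdorffEdist_ne_top_of_nonempty_of_bounded A.nonempty B.nonempty
    A.isCompact.isBounded B.isCompact.isBounded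

lemma Fn.dist_eq (A B : Fn X n) : dist A B = Metric.hausdorffDist (A.1 : Set X) (B.1 : Set X) := by
  rw [Subtype.dist_eq, Metric.NonemptyCompacts.dist_eq]

lemma isClosed_F1 : IsClosed (F1 X n) := by
  rw [← isOpen_compl_iff, Metric.isOpen_iff]
  intro A hA
  obtain ⟨x, hx⟩ := A.1.nonempty
  have hex : ∃ y ∈ (A.1 : Set X), y ≠ x := by
    by_contra h
    push_neg at h
    exact hA ⟨x, Set.eq_singleton_iff_unique_mem.2 ⟨hx, h⟩⟩
  obtain ⟨y, hy, hyx⟩ := hex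
  have hd : 0 < dist y x := dist_pos.2 hyx
  refine ⟨dist y x / 3, by positivity, fun B hB => ?_⟩
  rw [mem_ball, Fn.dist_eq] at hB
  rw [Metric.hausdorffDist_comm] at hB
  obtain ⟨x', hx', hxx'⟩ := Metric.exists_dist_lt_of_hausdorffDist_lt hx hB (fnEdist_ne_top X A.1 B.1)
  obtain ⟨y', hy', hyy'⟩ := Metric.exists_dist_lt_of_hausdorffDist_lt hy hB (fnEdist_ne_top X A.1 B.1)
  intro hBF1
  obtain ⟨z, hz⟩ := hBF1
  rw [hz, Set.mem_singleton_iff] at hx' hy'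
  subst hx' hy'
  have h1 := dist_triangle y y' x
  rw [dist_comm y' x] at h1
  linarith

lemma exists_near_not_F1 (hX : Perfect (Set.univ : Set X)) (hn : 2 ≤ n) {A : Fn X n}
    (hA : A ∈ F1 X n) {ε : ℝ} (hε : 0 < ε) : ∃ B : Fn X n, dist A B < ε ∧ B ∉ F1 X n := by
  obtain ⟨x, hx⟩ := hA
  have hacc := hX.acc x (Set.mem_univ x)
  rw [accPt_iff_nhds] at hacc
  obtain ⟨y, ⟨hy, -⟩, hyx⟩ := hacc (Metric.ball x (ε / 2)) (Metric.ball_mem_nhds _ (by positivity))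
  rw [Metric.mem_ball] at hy
  have hfin : ({x, y} : Set X).Finite := (Set.finite_singleton y).insert x
  have hcard : ({x, y} : Set X).ncard ≤ n :=
    le_trans (le_trans (Set.ncard_insert_le _ _) (by simp [Set.ncard_singleton])) hn
  refine ⟨⟨⟨⟨{x, y}, hfin.isCompact⟩, ⟨x, by simp⟩⟩, hfin, hcard⟩, ?_, ?_⟩
  · rw [Fn.dist_eq, hx]
    have hle : Metric.hausdorffDist ({x} : Set X) ({x, y} : Set X) ≤ dist x y := by
      apply Metric.hausdorffDist_le_of_mem_dist dist_nonneg
      · intro z hz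
        rw [Set.mem_singleton_iff] at hz
        exact ⟨x, by simp, by simp [hz, dist_nonneg]⟩
      · rintro z (rfl | rfl)
        · exact ⟨z, rfl, by simp [dist_nonneg]⟩
        · exact ⟨x, rfl, by rw [dist_comm]⟩
    rw [dist_comm] at hy
    calc Metric.hausdorffDist ({x} : Set X) ({x, y} : Set X) ≤ dist x y := hle
      _ < ε := by linarith
  · rintro ⟨z, hz⟩
    have hxz : x = z := by
      have h1 : x ∈ ({z} : Set X) := hz ▸ (by simp : x ∈ ({x, y} : Set X))
      simpa using h1
    have hyz : y = z := by
      have h1 : y ∈ ({z} : Set X) := hz ▸ (by simp : y ∈ ({x, y} : Set X))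
      simpa using h1
    exact hyx (hyz.trans hxz.symm)

lemma iterate_carrier (f : X → X) (k : ℕ) (A : Fn X n) :
    (((FnMap X n f)^[k] A).1 : Set X) = f^[k] '' (A.1 : Set X) := by
  induction k with
  | zero => simp
  | succ k ih =>
    rw [Function.iterate_succ_apply']
    show f '' (((FnMap X n f)^[k] A).1 : Set X) = _
    rw [ih, Function.iterate_succ', Function.comp_def, ← Set.image_comp]
    rfl

lemma sfn_comm (f : X → X) (k : ℕ) (A : Fn X n) :
    (SFnMap X n f)^[k] (SFnQ X n A) = SFnQ X n ((FnMap X n f)^[k] A) := by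
  induction k with
  | zero => rfl
  | succ k ih => rw [Function.iterate_succ_apply', Function.iterate_succ_apply', ih]; rfl

lemma sfnq_quotientMap : Topology.IsQuotientMap (SFnQ X n) := isQuotientMap_quot_mk

theorem stmt10 (X : Type*) [MetricSpace X] [CompactSpace X] [Nontrivial X]
    (hX : Perfect (Set.univ : Set X))
    (n : ℕ) (hn : 2 ≤ n) (f : X → X) (hf : Continuous f) (B : Fn X n) :
    (TransitivePt (FnMap X n f) B ↔ TransitivePt (SFnMap X n f) (SFnQ X n B)) ∧
    (TransitivePt (FnMap X n f) B → ∀ x ∈ (B.1 : Set X), TransitivePt f x) := by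
  constructor
  · constructor
    · intro hB
      unfold TransitivePt at *
      have hfun : (fun k : ℕ => (SFnMap X n f)^[k] (SFnQ X n B)) =
          (SFnQ X n) ∘ (fun k : ℕ => (FnMap X n f)^[k] B) := funext fun k => sfn_comm X n f k B
      rw [hfun, Set.range_comp]
      have hsurj : Function.Surjective (SFnQ X n) := fun b => Quotient.exists_rep b
      exact hsurj.denseRange.dense_image (continuous_quot_mk) hB
    · intro hqB
      unfold TransitivePt at *
      rw [dense_iff_inter_open] at hqB ⊢
      intro W hW hWne
      have hex : ∃ A ∈ W, A ∉ F1 X n := by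
        obtain ⟨A, hA⟩ := hWne
        by_cases hAF : A ∈ F1 X n
        · obtain ⟨ε, hε, hball⟩ := Metric.isOpen_iff.1 hW A hA
          obtain ⟨C, hC, hCF⟩ := exists_near_not_F1 X n hX hn hAF hε
          exact ⟨C, hball (by rw [Metric.mem_ball, dist_comm]; exact hC), hCF⟩
        · exact ⟨A, hA, hAF⟩
      obtain ⟨A, hAW, hAF⟩ := hex
      set U := W ∩ (F1 X n)ᶜ with hU
      have hUopen : IsOpen U := hW.inter (isClosed_F1 X n).isOpen_compl
      have hpre : SFnQ X n ⁻¹' (SFnQ X n '' U) = U := by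
        ext C
        constructor
        · rintro ⟨D, hD, hDC⟩
          have hrel := Quotient.exact hDC
          rcases hrel with rfl | ⟨hD1, -⟩
          · exact hD
          · exact absurd hD1 hD.2
        · intro hC
          exact ⟨C, hC, rfl⟩
      have hUq : IsOpen (SFnQ X n '' U) := by
        rw [← (sfnq_quotientMap X n).isOpen_preimage, hpre]
        exact hUopen
      have hUqne : (SFnQ X n '' U).Nonempty := ⟨_, A, ⟨hAW, hAF⟩, rfl⟩
      obtain ⟨χ, hχ1, k, hk⟩ := hqB _ hUq hUqne
      have hmem : (FnMap X n f)^[k] B ∈ U := by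
        have h2 : SFnQ X n ((FnMap X n f)^[k] B) = χ := (sfn_comm X n f k B).symm.trans hk
        rw [← hpre]
        exact Set.mem_preimage.2 (h2 ▸ hχ1)
      exact ⟨_, hmem.1, k, rfl⟩
  · intro hB x hx
    unfold TransitivePt at *
    rw [Metric.dense_iff]
    intro y ε hε
    set U : Set (Fn X n) := {A | (A.1 : Set X) ⊆ Metric.ball y ε} with hUdef
    have hUopen : IsOpen U := by
      rw [Metric.isOpen_iff]
      intro A hA
      obtain ⟨a, ha, hamax⟩ := A.1.isCompact.exists_isMaxOn A.1.nonempty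
        ((continuous_id.dist continuous_const).continuousOn)
      have hay : dist a y < ε := hA ha
      refine ⟨ε - dist a y, by linarith, fun C hC => ?_⟩
      rw [Metric.mem_ball, Fn.dist_eq] at hC
      intro c hc
      obtain ⟨a', ha', hca'⟩ := Metric.exists_dist_lt_of_hausdorffDist_lt hc hC
        (fnEdist_ne_top X C.1 A.1)
      have hle : dist a' y ≤ dist a y := hamax ha'
      rw [Metric.mem_ball]
      calc dist c y ≤ dist c a' + dist a' y := dist_triangle _ _ _
        _ < (ε - dist a y) + dist a y := by linarith
        _ = ε := by ring
    have hUne : U.Nonempty :=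
      ⟨⟨⟨⟨{y}, isCompact_singleton⟩, ⟨y, rfl⟩⟩, Set.finite_singleton y,
        by show ({y} : Set X).ncard ≤ n; rw [Set.ncard_singleton]; omega⟩,
       fun z hz => by
        have hzy : z = y := hz
        simp [hzy, hε]⟩
    obtain ⟨A, hAU, k, hk⟩ := (dense_iff_inter_open.1 hB) U hUopen hUne
    have hmem : f^[k] x ∈ (((FnMap X n f)^[k] B).1 : Set X) := by
      rw [iterate_carrier]
      exact ⟨x, hx, rfl⟩
    have hk' : (FnMap X n f)^[k] B = A := hk
    rw [hk'] at hmem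
    exact ⟨f^[k] x, hAU hmem, k, rfl⟩
end
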